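/- Let λ ∈ ℂ, let Δ, Δ', Δ'', Δ''' be fixed n×n complex matrices with Δ invertible, and let M, η̂, ξ̂ ∈ ℂⁿ. Define w(θ) = e^{λθ} Δ⁻¹ (M + [Δ' − θΔ] η̂ + [Δ'' − θ²Δ] ξ̂) and v(θ) = e^{λθ} Δ⁻¹ ([Δ' − θΔ] w(0) − ½[Δ'' − θ²Δ] η̂ − ⅓[Δ''' − θ³Δ] ξ̂). Then λ v(θ) − v'(θ) = w(θ) for all θ ∈ ℝ. -/

import Mathlib

/-!
Write `x = w 0`. Since `Δ⁻¹ *ᵥ ((A - c • Δ) *ᵥ y) = Δ⁻¹ *ᵥ (A *ᵥ y) - c • y`, we get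
`w θ = e^{λθ} (x - θ η - θ² ξ)` and `v θ = e^{λθ} p θ` for the cubic
`p θ = a - θ x + θ²/2 η + θ³/3 ξ`, whose derivative is `-(x - θ η - θ² ξ)`.
For any `p`, `λ (e^{λθ} p) - (e^{λθ} p)' = -e^{λθ} p'`, which gives the claim.
-/

open Matrix

section
variable {E : Type*} [NormedAddCommGroup E] [NormedSpace ℂ E]

theorem HasDerivAt.cexp_mul_smul {p : ℝ → E} {p' : E} {θ : ℝ} (lam : ℂ)
    (hp : HasDerivAt p p' θ) :
    HasDerivAt (fun t : ℝ => Complex.exp (lam * t) • p t)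
      (Complex.exp (lam * θ) • (lam • p θ + p')) θ := by
  have hexp : HasDerivAt (fun t : ℝ => Complex.exp (lam * t)) (Complex.exp (lam * θ) * lam) θ := by
    simpa using ((Complex.ofRealCLM.hasDerivAt (x := θ)).const_mul lam).cexp
  refine (hexp.smul hp).congr_deriv ?_
  rw [smul_add, mul_comm, mul_smul, add_comm]

theorem smul_sub_deriv_cexp_mul_smul {p : ℝ → E} {p' : E} {θ : ℝ} (lam : ℂ)
    (hp : HasDerivAt p p' θ) :
    lam • (Complex.exp (lam * θ) • p θ) - deriv (fun t : ℝ => Complex.exp (lam * t) • p t) θ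
      = -(Complex.exp (lam * θ) • p') := by
  rw [(hp.cexp_mul_smul lam).deriv, smul_add, smul_comm lam]
  abel

theorem hasDerivAt_ofReal_pow_succ (k : ℕ) (θ : ℝ) :
    HasDerivAt (fun t : ℝ => (t : ℂ) ^ (k + 1)) ((k + 1 : ℂ) * (θ : ℂ) ^ k) θ := by
  simpa using (hasDerivAt_pow (k + 1) (θ : ℂ)).comp_ofReal

theorem hasDerivAt_cubic_smul (a x y z : E) (θ : ℝ) :
    HasDerivAt (fun t : ℝ => a - (t : ℂ) • x + ((t : ℂ) ^ 2 / 2) • y + ((t : ℂ) ^ 3 / 3) • z)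
      (-x + (θ : ℂ) • y + (θ : ℂ) ^ 2 • z) θ := by
  have hlin := (hasDerivAt_ofReal_pow_succ 0 θ).smul_const x
  have hquad := ((hasDerivAt_ofReal_pow_succ 1 θ).div_const 2).smul_const y
  have hcub := ((hasDerivAt_ofReal_pow_succ 2 θ).div_const 3).smul_const z
  convert (((hasDerivAt_const θ a).sub hlin).add hquad).add hcub using 1
  · ext t; simp
  · push_cast; module
end

theorem inv_mulVec_sub_smul_mulVec {n : ℕ} {Δ : Matrix (Fin n) (Fin n) ℂ} (hΔ : IsUnit Δ.det)
    (A : Matrix (Fin n) (Fin n) ℂ) (c : ℂ) (y : Fin n → ℂ) :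
    Δ⁻¹ *ᵥ ((A - c • Δ) *ᵥ y) = Δ⁻¹ *ᵥ (A *ᵥ y) - c • y := by
  rw [sub_mulVec, mulVec_sub, smul_mulVec, mulVec_smul, mulVec_mulVec (N := Δ),
    nonsing_inv_mul Δ hΔ, one_mulVec]

theorem resolvent_representation_corollary25 {n : ℕ} (lam : ℂ)
    (Δ Δ' Δ'' Δ''' : Matrix (Fin n) (Fin n) ℂ) (hΔ : IsUnit Δ.det)
    (M η ξ : Fin n → ℂ) :
    let w : ℝ → Fin n → ℂ := fun θ => Complex.exp (lam * θ) •
      Δ⁻¹.mulVec (M + (Δ' - (θ : ℂ) • Δ).mulVec η + (Δ'' - (θ : ℂ)^2 • Δ).mulVec ξ)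
    let v : ℝ → Fin n → ℂ := fun θ => Complex.exp (lam * θ) •
      Δ⁻¹.mulVec ((Δ' - (θ : ℂ) • Δ).mulVec (w 0)
        - (2 : ℂ)⁻¹ • (Δ'' - (θ : ℂ)^2 • Δ).mulVec η
        - (3 : ℂ)⁻¹ • (Δ''' - (θ : ℂ)^3 • Δ).mulVec ξ)
    ∀ θ : ℝ, lam • v θ - deriv v θ = w θ := by
  intro w v θ
  set x := w 0
  have hx : x = Δ⁻¹ *ᵥ (M + Δ' *ᵥ η + Δ'' *ᵥ ξ) := by simp [x, w]
  have hw : w θ = Complex.exp (lam * θ) • (x - (θ : ℂ) • η - (θ : ℂ) ^ 2 • ξ) := by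
    simp only [w, hx, mulVec_add, inv_mulVec_sub_smul_mulVec hΔ]
    congr 1
    abel
  have hv : v = fun t : ℝ => Complex.exp (lam * t) •
      (Δ⁻¹ *ᵥ (Δ' *ᵥ x - (2 : ℂ)⁻¹ • Δ'' *ᵥ η - (3 : ℂ)⁻¹ • Δ''' *ᵥ ξ) - (t : ℂ) • x
        + ((t : ℂ) ^ 2 / 2) • η + ((t : ℂ) ^ 3 / 3) • ξ) := by
    funext t
    simp only [v, mulVec_sub, mulVec_smul, inv_mulVec_sub_smul_mulVec hΔ]
    congr 1
    module
  rw [hw, hv, smul_sub_deriv_cexp_mul_smul lam (hasDerivAt_cubic_smul _ x η ξ θ), ← smul_neg]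
  congr 1
  abel
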